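/- arXiv:0911.3364 — 5 statements merged into one kernel-verified Lean document; each statement's English description precedes it below -/
import Mathlib

section
/- Let V be a 4-dimensional real vector space with a Lorentzian inner product g of signature (+,+,+,−), extended complex-bilinearly to V⊗ℂ. Then every 2-dimensional totally null complex subspace N of V⊗ℂ has real index exactly one, i.e. N ∩ conj(N) is the complexification of a 1-dimensional real subspace of V. -/
/-!
STATEMENT 1: Let V be a 4-dimensional real vector space with a Lorentzian inner
product g of signature (+,+,+,−), extended complex-bilinearly to V⊗ℂ. Then every
2-dimensional totally null complex subspace N of V⊗ℂ has real index exactly one,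
i.e. N ∩ conj(N) is the complexification of a 1-dimensional real subspace of V.

We model the complexification of `V = Fin 4 → ℝ` as `Fin 4 → ℂ`, conjugation
being coordinatewise, and the Lorentzian signature expressed by the existence of a
basis in which g has the diagonal form diag(1,1,1,-1).
-/

open scoped ComplexConjugate

/-- Coordinatewise complex conjugation on `Fin 4 → ℂ`, as a `conj`-semilinear map. -/
noncomputable def conjMap : (Fin 4 → ℂ) →ₛₗ[starRingEnd ℂ] (Fin 4 → ℂ) where
  toFun w := fun i => conj (w i)
  map_add' x y := by funext i; simp
  map_smul' c x := by funext i; simp [mul_comm]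

/-- The real part of a complexified vector. -/
noncomputable def reVec (w : Fin 4 → ℂ) : Fin 4 → ℝ := fun i => (w i).re

/-- The imaginary part of a complexified vector. -/
noncomputable def imVec (w : Fin 4 → ℂ) : Fin 4 → ℝ := fun i => (w i).im

/-- The complex-bilinear extension of a real bilinear form `gR` to the
complexification. -/
noncomputable def gCext (gR : (Fin 4 → ℝ) → (Fin 4 → ℝ) → ℝ)
    (x y : Fin 4 → ℂ) : ℂ :=
  (gR (reVec x) (reVec y) - gR (imVec x) (imVec y) : ℝ) +
    Complex.I * ((gR (reVec x) (imVec y) + gR (imVec x) (reVec y) : ℝ) : ℂ)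

/-- The Lorentzian signature matrix diag(1,1,1,-1). -/
noncomputable def etaL : Fin 4 → Fin 4 → ℝ :=
  fun i j => if i = j then (if (i : ℕ) < 3 then 1 else -1) else 0

/-!
In a basis where `g = diag(1,1,1,-1)`, the spinor map
`z ↦ !![z₂ + z₃, z₀ - i z₁; z₀ + i z₁, z₃ - z₂]` turns the complexified quadratic form into
`-det` and complex conjugation into the conjugate transpose. So `N` becomes a 2-dimensional
space of singular `2 × 2` matrices, which, up to transposition, is the space of all matrices
killing a fixed spinor `u ≠ 0`. A matrix `X` with `X u = 0` and `Xᴴ u = 0` is a multiple of the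
Hermitian matrix `w̄ wᵀ`, `w ⊥ u`; hence `N ∩ conj N` is the line through the real vector
corresponding to `w̄ wᵀ`.
-/

open Matrix

namespace Matrix

variable {K : Type*} [Field K]

def perp (u : Fin 2 → K) : Fin 2 → K := ![u 1, -u 0]

lemma perp_dotProduct_self (u : Fin 2 → K) : perp u ⬝ᵥ u = 0 := by
  simp only [perp, dotProduct, Fin.sum_univ_two, cons_val_zero, cons_val_one, cons_val_fin_one,
    neg_mul]
  ring

lemma perp_ne_zero {u : Fin 2 → K} (hu : u ≠ 0) : perp u ≠ 0 := by
  contrapose! hu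
  have h0 := congrFun hu 0
  have h1 := congrFun hu 1
  simp only [perp, Matrix.cons_val_zero, Matrix.cons_val_one, Pi.zero_apply, neg_eq_zero] at h0 h1
  ext i; fin_cases i <;> simp [h0, h1]

lemma exists_eq_smul_perp_of_dotProduct_eq_zero {u a : Fin 2 → K} (hu : u ≠ 0)
    (h : a ⬝ᵥ u = 0) : ∃ c : K, a = c • perp u := by
  simp only [dotProduct, Fin.sum_univ_two] at h
  by_cases h0 : u 0 = 0
  · have h1 : u 1 ≠ 0 := fun h1 => hu (by ext i; fin_cases i <;> simp [h0, h1])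
    refine ⟨a 0 / u 1, ?_⟩
    ext i; fin_cases i
    · simp [perp, h1]
    · simpa [perp, h0, h1] using h
  · refine ⟨-a 1 / u 0, ?_⟩
    ext i; fin_cases i <;> simp only [perp, Fin.zero_eta, Fin.mk_one, Pi.smul_apply, cons_val_zero,
      cons_val_one, cons_val_fin_one, smul_eq_mul, mul_neg]
    · field_simp
      linear_combination h
    · field_simp

lemma mulVec_eq_zero_iff_exists_eq_vecMulVec_perp {u : Fin 2 → K} (hu : u ≠ 0)
    (X : Matrix (Fin 2) (Fin 2) K) :
    X *ᵥ u = 0 ↔ ∃ a, X = vecMulVec a (perp u) := by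
  constructor
  · intro h
    choose c hc using fun i => exists_eq_smul_perp_of_dotProduct_eq_zero hu (congrFun h i)
    exact ⟨c, by ext i j; simp [vecMulVec, hc i]⟩
  · rintro ⟨a, rfl⟩
    rw [vecMulVec_mulVec, op_smul_eq_smul, perp_dotProduct_self, zero_smul]

lemma exists_eq_vecMulVec_of_det_eq_zero {X : Matrix (Fin 2) (Fin 2) K} (h : X.det = 0) :
    ∃ p q, X = vecMulVec p q := by
  obtain ⟨u, hu, hXu⟩ := exists_mulVec_eq_zero_iff.mpr h
  obtain ⟨p, rfl⟩ := (mulVec_eq_zero_iff_exists_eq_vecMulVec_perp hu X).mp hXu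
  exact ⟨p, _, rfl⟩

lemma det_vecMulVec_add_vecMulVec (p q r s : Fin 2 → K) :
    (vecMulVec p q + vecMulVec r s).det =
      (p 0 * r 1 - p 1 * r 0) * (q 0 * s 1 - q 1 * s 0) := by
  simp only [vecMulVec, of_add_of, det_fin_two, of_apply, Pi.add_apply]
  ring

lemma exists_ne_zero_dotProduct_eq_zero {q s : Fin 2 → K} (h : q 0 * s 1 - q 1 * s 0 = 0) :
    ∃ u ≠ 0, q ⬝ᵥ u = 0 ∧ s ⬝ᵥ u = 0 := by
  obtain ⟨u, hu, hqs⟩ := exists_mulVec_eq_zero_iff.mpr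
    ((det_fin_two_of (q 0) (q 1) (s 0) (s 1)).trans h)
  refine ⟨u, hu, ?_, ?_⟩
  · simpa [dotProduct, Fin.sum_univ_two, mulVec] using congrFun hqs 0
  · simpa [dotProduct, Fin.sum_univ_two, mulVec] using congrFun hqs 1

lemma exists_mulVec_eq_zero_or_vecMul_eq_zero {X Y : Matrix (Fin 2) (Fin 2) K}
    (hX : X.det = 0) (hY : Y.det = 0) (hXY : (X + Y).det = 0) :
    ∃ u ≠ 0, (X *ᵥ u = 0 ∧ Y *ᵥ u = 0) ∨ (u ᵥ* X = 0 ∧ u ᵥ* Y = 0) := by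
  obtain ⟨p, q, rfl⟩ := exists_eq_vecMulVec_of_det_eq_zero hX
  obtain ⟨r, s, rfl⟩ := exists_eq_vecMulVec_of_det_eq_zero hY
  rw [det_vecMulVec_add_vecMulVec] at hXY
  rcases mul_eq_zero.mp hXY with hpr | hqs
  · obtain ⟨u, hu, hp, hr⟩ := exists_ne_zero_dotProduct_eq_zero hpr
    refine ⟨u, hu, Or.inr ⟨?_, ?_⟩⟩ <;>
      simp [vecMul_vecMulVec, dotProduct_comm u, hp, hr]
  · obtain ⟨u, hu, hq, hs⟩ := exists_ne_zero_dotProduct_eq_zero hqs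
    exact ⟨u, hu, Or.inl ⟨by simp [vecMulVec_mulVec, hq], by simp [vecMulVec_mulVec, hs]⟩⟩

variable [StarRing K]

lemma mulVec_eq_zero_and_conjTranspose_mulVec_eq_zero_iff {u : Fin 2 → K} (hu : u ≠ 0)
    (X : Matrix (Fin 2) (Fin 2) K) :
    X *ᵥ u = 0 ∧ Xᴴ *ᵥ u = 0 ↔ ∃ c : K, X = c • vecMulVec (star (perp u)) (perp u) := by
  rw [mulVec_eq_zero_iff_exists_eq_vecMulVec_perp hu]
  constructor
  · rintro ⟨⟨a, rfl⟩, h⟩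
    have hw : star (perp u) ≠ 0 := star_ne_zero.mpr (perp_ne_zero hu)
    rw [conjTranspose_vecMulVec, vecMulVec_mulVec, op_smul_eq_smul] at h
    obtain ⟨c, hc⟩ := exists_eq_smul_perp_of_dotProduct_eq_zero hu
      ((smul_eq_zero.mp h).resolve_right hw)
    refine ⟨star c, ?_⟩
    rw [← star_star a, hc, star_smul, smul_vecMulVec]
  · rintro ⟨c, rfl⟩
    have hH : (vecMulVec (star (perp u)) (perp u))ᴴ = vecMulVec (star (perp u)) (perp u) := by
      rw [conjTranspose_vecMulVec, star_star]
    refine ⟨⟨c • star (perp u), by rw [smul_vecMulVec]⟩, ?_⟩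
    rw [conjTranspose_smul, hH, ← smul_vecMulVec, vecMulVec_mulVec, op_smul_eq_smul,
      perp_dotProduct_self, zero_smul]

end Matrix

lemma conjMap_eq_star (w : Fin 4 → ℂ) : conjMap w = star w := rfl

lemma forall_im_eq_zero_iff_conjMap_eq_self (v : Fin 4 → ℂ) :
    (∀ i, (v i).im = 0) ↔ conjMap v = v := by
  simp only [funext_iff, conjMap_eq_star, Pi.star_apply, Complex.star_def,
    Complex.conj_eq_iff_im]

section Spinor

variable (Φ : (Fin 4 → ℂ) →ₗ[ℂ] Matrix (Fin 2) (Fin 2) ℂ) (hΦ : Function.Injective Φ)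
  (hconj : ∀ z, Φ (conjMap z) = (Φ z)ᴴ)
include hΦ hconj

lemma exists_real_span_eq_inf_comap_conjMap_of_mulVec_eq_zero
    {N : Submodule ℂ (Fin 4 → ℂ)} (hN : Module.finrank ℂ N = 2)
    {u : Fin 2 → ℂ} (hu : u ≠ 0) (hNu : ∀ z ∈ N, Φ z *ᵥ u = 0) :
    ∃ v : Fin 4 → ℂ, v ≠ 0 ∧ (∀ i, (v i).im = 0) ∧
      N ⊓ Submodule.comap conjMap N = Submodule.span ℂ {v} := by
  set L := LinearMap.range ((vecMulVecBilin ℂ ℂ).flip (perp u))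
  have hmemL : ∀ X, X ∈ L ↔ X *ᵥ u = 0 := fun X => by
    rw [mulVec_eq_zero_iff_exists_eq_vecMulVec_perp hu, LinearMap.mem_range]
    simp [eq_comm]
  have hNL : N.map Φ = L := by
    refine Submodule.eq_of_le_of_finrank_le ?_ ?_
    · rintro _ ⟨z, hz, rfl⟩
      exact (hmemL _).mpr (hNu z hz)
    · rw [← (Submodule.equivMapOfInjective Φ hΦ N).finrank_eq, hN]
      exact (LinearMap.finrank_range_le _).trans (by simp)
  have hmem : ∀ z, z ∈ N ↔ Φ z *ᵥ u = 0 := fun z => by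
    rw [← hmemL, ← hNL, Submodule.mem_map]
    simp [hΦ.eq_iff]
  obtain ⟨v, -, hv⟩ : vecMulVec (star (perp u)) (perp u) ∈ N.map Φ := by
    rw [hNL, hmemL, vecMulVec_mulVec, op_smul_eq_smul, perp_dotProduct_self, zero_smul]
  refine ⟨v, ?_, ?_, ?_⟩
  · rintro rfl
    have hw := perp_ne_zero hu
    exact vecMulVec_ne_zero (star_ne_zero.mpr hw) hw (by rw [← hv, map_zero])
  · rw [forall_im_eq_zero_iff_conjMap_eq_self]
    exact hΦ (by rw [hconj, hv, conjTranspose_vecMulVec, star_star])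
  · ext z
    rw [Submodule.mem_inf, Submodule.mem_comap, hmem, hmem, hconj,
      mulVec_eq_zero_and_conjTranspose_mulVec_eq_zero_iff hu, Submodule.mem_span_singleton]
    refine exists_congr fun c => ?_
    rw [← hv, ← map_smul, hΦ.eq_iff, eq_comm]

lemma exists_real_span_eq_inf_comap_conjMap {N : Submodule ℂ (Fin 4 → ℂ)}
    (hN : Module.finrank ℂ N = 2) (hdet : ∀ z ∈ N, (Φ z).det = 0) :
    ∃ v : Fin 4 → ℂ, v ≠ 0 ∧ (∀ i, (v i).im = 0) ∧
      N ⊓ Submodule.comap conjMap N = Submodule.span ℂ {v} := by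
  let b := Module.finBasisOfFinrankEq ℂ N hN
  have eq_zero_of_basis (T : (Fin 4 → ℂ) →ₗ[ℂ] (Fin 2 → ℂ)) (h0 : T (b 0) = 0)
      (h1 : T (b 1) = 0) : ∀ z ∈ N, T z = 0 := fun z hz =>
    LinearMap.congr_fun (b.ext (f₁ := T ∘ₗ N.subtype) (f₂ := 0)
      (Fin.forall_fin_two.mpr ⟨h0, h1⟩)) ⟨z, hz⟩
  obtain ⟨u, hu, hker | hcoker⟩ := exists_mulVec_eq_zero_or_vecMul_eq_zero
    (hdet _ (b 0).2) (hdet _ (b 1).2) (by rw [← map_add]; exact hdet _ (N.add_mem (b 0).2 (b 1).2))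
  · exact exists_real_span_eq_inf_comap_conjMap_of_mulVec_eq_zero Φ hΦ hconj hN hu
      (eq_zero_of_basis ((mulVecBilin ℂ ℂ).flip u ∘ₗ Φ) hker.1 hker.2)
  · -- transposing `Φ` exchanges kernels and cokernels and preserves `hconj`
    refine exists_real_span_eq_inf_comap_conjMap_of_mulVec_eq_zero
      ((transposeLinearEquiv _ _ ℂ ℂ).toLinearMap ∘ₗ Φ) (transpose_injective.comp hΦ)
      (fun z => congrArg transpose (hconj z)) hN hu fun z hz => ?_
    change (Φ z)ᵀ *ᵥ u = 0
    rw [mulVec_transpose]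
    exact eq_zero_of_basis (vecMulBilin ℂ ℂ u ∘ₗ Φ) hcoker.1 hcoker.2 z hz

end Spinor

open Complex in
noncomputable def toSpinor : (Fin 4 → ℂ) →ₗ[ℂ] Matrix (Fin 2) (Fin 2) ℂ where
  toFun z := !![z 2 + z 3, z 0 - I * z 1; z 0 + I * z 1, z 3 - z 2]
  map_add' x y := by ext i j; fin_cases i <;> fin_cases j <;> simp <;> ring
  map_smul' c x := by ext i j; fin_cases i <;> fin_cases j <;> simp <;> ring

open Complex in
lemma toSpinor_apply (z : Fin 4 → ℂ) :
    toSpinor z = !![z 2 + z 3, z 0 - I * z 1; z 0 + I * z 1, z 3 - z 2] := rfl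

lemma toSpinor_injective : Function.Injective toSpinor := by
  refine (injective_iff_map_eq_zero _).mpr fun z hz => ?_
  simp only [toSpinor_apply, ← Matrix.ext_iff, Fin.forall_fin_two, of_apply, cons_val',
    cons_val_zero, cons_val_one, empty_val', cons_val_fin_one, Matrix.zero_apply] at hz
  obtain ⟨⟨h00, h01⟩, h10, h11⟩ := hz
  have hI : Complex.I * z 1 = 0 := by linear_combination (h10 - h01) / 2
  ext i; fin_cases i <;> simp only [Fin.zero_eta, Fin.mk_one, Fin.reduceFinMk, Pi.zero_apply]
  · linear_combination (h01 + h10) / 2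
  · simpa using hI
  · linear_combination (h00 - h11) / 2
  · linear_combination (h00 + h11) / 2

lemma toSpinor_conjMap (z : Fin 4 → ℂ) : toSpinor (conjMap z) = (toSpinor z)ᴴ := by
  ext i j; fin_cases i <;> fin_cases j <;> simp [toSpinor_apply, conjMap_eq_star, sub_eq_add_neg]

lemma det_toSpinor (z : Fin 4 → ℂ) :
    (toSpinor z).det = -(z 0 ^ 2 + z 1 ^ 2 + z 2 ^ 2 - z 3 ^ 2) := by
  rw [toSpinor_apply, det_fin_two_of]
  linear_combination (z 1 ^ 2) * Complex.I_sq

section Complexify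

variable {m n : Type*}

open Complex in
noncomputable def complexify (f : (n → ℝ) →ₗ[ℝ] (m → ℝ)) : (n → ℂ) →ₗ[ℂ] (m → ℂ) where
  toFun w i := f (fun j => (w j).re) i + f (fun j => (w j).im) i * I
  map_add' x y := by
    have hre : (fun j => (x j + y j).re) = (fun j => (x j).re) + fun j => (y j).re := rfl
    have him : (fun j => (x j + y j).im) = (fun j => (x j).im) + fun j => (y j).im := rfl
    ext i
    simp only [Pi.add_apply, hre, him, map_add, ofReal_add]
    ring
  map_smul' c x := by
    have hre : (fun j => (c * x j).re) = c.re • (fun j => (x j).re) - c.im • fun j => (x j).im :=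
      funext fun j => by simp [mul_re]
    have him : (fun j => (c * x j).im) = c.re • (fun j => (x j).im) + c.im • fun j => (x j).re :=
      funext fun j => by simp [mul_im]
    ext i
    simp only [Pi.smul_apply, smul_eq_mul, hre, him, map_add, map_sub, map_smul, Pi.add_apply,
      Pi.sub_apply, RingHom.id_apply, ofReal_add, ofReal_sub, ofReal_mul]
    apply Complex.ext <;> simp

lemma complexify_apply (f : (n → ℝ) →ₗ[ℝ] (m → ℝ)) (w : n → ℂ) (i : m) :
    complexify f w i = f (fun j => (w j).re) i + f (fun j => (w j).im) i * Complex.I := rfl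

lemma complexify_injective {f : (n → ℝ) →ₗ[ℝ] (m → ℝ)} (hf : Function.Injective f) :
    Function.Injective (complexify f) := by
  refine (injective_iff_map_eq_zero _).mpr fun w hw => ?_
  have hre : f (fun j => (w j).re) = 0 := funext fun i => by
    simpa [complexify_apply] using congrArg Complex.re (congrFun hw i)
  have him : f (fun j => (w j).im) = 0 := funext fun i => by
    simpa [complexify_apply] using congrArg Complex.im (congrFun hw i)
  funext j
  exact Complex.ext (congrFun ((map_eq_zero_iff f hf).mp hre) j)
    (congrFun ((map_eq_zero_iff f hf).mp him) j)

lemma complexify_star (f : (n → ℝ) →ₗ[ℝ] (m → ℝ)) (w : n → ℂ) :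
    complexify f (star w) = star (complexify f w) := by
  have him : (fun j => (star w j).im) = -fun j => (w j).im := funext fun j => by simp
  funext i
  rw [Pi.star_apply, complexify_apply, complexify_apply, him, map_neg]
  apply Complex.ext <;> simp

end Complexify

lemma apply_eq_of_apply_basis_eq_etaL {M : Type*} [AddCommGroup M] [Module ℝ M]
    (gR : M →ₗ[ℝ] M →ₗ[ℝ] ℝ) (b : Module.Basis (Fin 4) ℝ M)
    (hsig : ∀ i j, gR (b i) (b j) = etaL i j) (v w : M) :
    gR v w = b.repr v 0 * b.repr w 0 + b.repr v 1 * b.repr w 1 + b.repr v 2 * b.repr w 2 -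
      b.repr v 3 * b.repr w 3 := by
  rw [← Matrix.toLinearMap₂_toMatrix₂ b b gR, Matrix.toLinearMap₂_apply]
  simp only [LinearMap.toMatrix₂_apply, hsig, etaL, smul_eq_mul, mul_ite, mul_one, mul_neg,
    mul_zero, Finset.sum_ite_eq, Finset.mem_univ, ↓reduceIte, Fin.sum_univ_four]
  norm_num
  ring

lemma det_toSpinor_complexify (gR : (Fin 4 → ℝ) →ₗ[ℝ] (Fin 4 → ℝ) →ₗ[ℝ] ℝ)
    (b : Module.Basis (Fin 4) ℝ (Fin 4 → ℝ)) (hsig : ∀ i j, gR (b i) (b j) = etaL i j)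
    (z : Fin 4 → ℂ) :
    (toSpinor (complexify b.equivFun.toLinearMap z)).det = -gCext (fun v w => gR v w) z z := by
  set a := b.repr (reVec z)
  set c := b.repr (imVec z)
  have hw : ∀ i, complexify b.equivFun.toLinearMap z i = a i + c i * Complex.I := fun i => rfl
  simp only [det_toSpinor, hw, gCext, apply_eq_of_apply_basis_eq_etaL gR b hsig]
  push_cast
  linear_combination (-(c 0 ^ 2 + c 1 ^ 2 + c 2 ^ 2 - c 3 ^ 2) : ℂ) * Complex.I_sq

theorem lorentzian_totally_null_two_plane_has_real_index_one_general
    (gR : (Fin 4 → ℝ) →ₗ[ℝ] (Fin 4 → ℝ) →ₗ[ℝ] ℝ)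
    (b : Module.Basis (Fin 4) ℝ (Fin 4 → ℝ))
    (hsig : ∀ i j, gR (b i) (b j) = etaL i j)
    (N : Submodule ℂ (Fin 4 → ℂ))
    (hdim : Module.finrank ℂ N = 2)
    (hnull : ∀ x ∈ N, ∀ y ∈ N, gCext (fun v w => gR v w) x y = 0) :
    ∃ v : Fin 4 → ℂ, v ≠ 0 ∧ (∀ i, (v i).im = 0) ∧
      N ⊓ Submodule.comap conjMap N = Submodule.span ℂ {v} := by
  refine exists_real_span_eq_inf_comap_conjMap (toSpinor ∘ₗ complexify b.equivFun.toLinearMap)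
    (toSpinor_injective.comp (complexify_injective b.equivFun.injective)) (fun z => ?_) hdim
    fun z hz => ?_
  · simp only [LinearMap.comp_apply, conjMap_eq_star, complexify_star]
    rw [← conjMap_eq_star, toSpinor_conjMap]
  · rw [LinearMap.comp_apply, det_toSpinor_complexify gR b hsig, hnull z hz z hz, neg_zero]

theorem lorentzian_totally_null_two_plane_has_real_index_one
    (gR : (Fin 4 → ℝ) →ₗ[ℝ] (Fin 4 → ℝ) →ₗ[ℝ] ℝ)
    (hsymm : ∀ v w, gR v w = gR w v)
    (b : Module.Basis (Fin 4) ℝ (Fin 4 → ℝ))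
    (hsig : ∀ i j, gR (b i) (b j) = etaL i j)
    (N : Submodule ℂ (Fin 4 → ℂ))
    (hdim : Module.finrank ℂ N = 2)
    (hnull : ∀ x ∈ N, ∀ y ∈ N, gCext (fun v w => gR v w) x y = 0) :
    ∃ v : Fin 4 → ℂ, v ≠ 0 ∧ (∀ i, (v i).im = 0) ∧
      N ⊓ Submodule.comap conjMap N = Submodule.span ℂ {v} :=
  lorentzian_totally_null_two_plane_has_real_index_one_general gR b hsig N hdim hnull
end

section
/- Let V be a 4-dimensional real vector space with an inner product g of split signature (+,+,−,−), extended complex-bilinearly to V⊗ℂ. Then every 2-dimensional totally null complex subspace N of V⊗ℂ has real index zero or two (never one). -/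
/-!
STATEMENT 2: Let V be a 4-dimensional real vector space with an inner product g of
split signature (+,+,−,−), extended complex-bilinearly to V⊗ℂ. Then every
2-dimensional totally null complex subspace N of V⊗ℂ has real index zero or two
(never one).

The real index of N is dim_ℂ (N ∩ conj N).
-/

open scoped ComplexConjugate

/-- The split signature matrix diag(1,1,-1,-1). -/
noncomputable def etaS : Fin 4 → Fin 4 → ℝ :=
  fun i j => if i = j then (if (i : ℕ) < 2 then 1 else -1) else 0

/-
If `N ∩ conj N ≠ 0`, it contains a nonzero real vector `v`. For `w = x + i y ∈ N`, total
nullity of `span {v, w}` says that `v` is null and orthogonal to `x` and `y`, that `x ⊥ y` and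
`g(x,x) = g(y,y)`. Hence `g(αv + βx + γy) = (β² + γ²) g(x,x)` is semidefinite on
`span_ℝ {v, x, y}`, and in signature `(2,2)` a semidefinite subspace has dimension at most `2`.
The resulting relation between `v, x, y` must involve `x` or `y`, and rearranging it puts `y`,
hence `conj w = w - 2 i y`, in `N`. So a nonzero intersection forces `conj N = N`.
-/

open Complex

noncomputable def ofRealVec (x : Fin 4 → ℝ) : Fin 4 → ℂ := fun i => (x i : ℂ)

@[simp] lemma reVec_ofRealVec (x : Fin 4 → ℝ) : reVec (ofRealVec x) = x := by
  funext i; simp [reVec, ofRealVec]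

@[simp] lemma imVec_ofRealVec (x : Fin 4 → ℝ) : imVec (ofRealVec x) = 0 := by
  funext i; simp [imVec, ofRealVec]

lemma ofRealVec_reVec (w : Fin 4 → ℂ) : ofRealVec (reVec w) = (2 : ℂ)⁻¹ • (w + conjMap w) := by
  funext i; apply Complex.ext <;> simp [ofRealVec, reVec, conjMap]; ring

lemma ofRealVec_imVec (w : Fin 4 → ℂ) :
    ofRealVec (imVec w) = (2 * I)⁻¹ • (w - conjMap w) := by
  funext i; apply Complex.ext <;> simp [ofRealVec, imVec, conjMap]; ring

lemma conjMap_eq_sub (w : Fin 4 → ℂ) : conjMap w = w - (2 * I) • ofRealVec (imVec w) := by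
  funext i; apply Complex.ext <;> simp [ofRealVec, imVec, conjMap]; ring

lemma gCext_eq_zero_iff (g : (Fin 4 → ℝ) → (Fin 4 → ℝ) → ℝ) (x y : Fin 4 → ℂ) :
    gCext g x y = 0 ↔ g (reVec x) (reVec y) = g (imVec x) (imVec y) ∧
      g (reVec x) (imVec y) + g (imVec x) (reVec y) = 0 := by
  simp [gCext, Complex.ext_iff, sub_eq_zero]

lemma exists_ofRealVec_mem {N : Submodule ℂ (Fin 4 → ℂ)} {x : Fin 4 → ℂ} (hx : x ∈ N)
    (hcx : conjMap x ∈ N) (hx0 : x ≠ 0) : ∃ v, v ≠ 0 ∧ ofRealVec v ∈ N := by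
  by_cases hre : reVec x = 0
  · refine ⟨imVec x, fun him => hx0 ?_, ?_⟩
    · funext i
      exact Complex.ext (congrFun hre i) (congrFun him i)
    · rw [ofRealVec_imVec]
      exact N.smul_mem _ (N.sub_mem hx hcx)
  · refine ⟨reVec x, hre, ?_⟩
    rw [ofRealVec_reVec]
    exact N.smul_mem _ (N.add_mem hx hcx)

lemma ofRealVec_imVec_mem {N : Submodule ℂ (Fin 4 → ℂ)} {v : Fin 4 → ℝ} (hv : v ≠ 0)
    (hvN : ofRealVec v ∈ N) {w : Fin 4 → ℂ} (hw : w ∈ N)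
    (hdep : ¬ LinearIndependent ℝ ![v, reVec w, imVec w]) : ofRealVec (imVec w) ∈ N := by
  obtain ⟨c, hc, i, hi⟩ := Fintype.not_linearIndependent_iff.mp hdep
  simp only [Fin.sum_univ_three, Matrix.cons_val_zero, Matrix.cons_val_one,
    Matrix.cons_val_two, Matrix.head_cons, Matrix.tail_cons] at hc
  by_cases h12 : c 1 = 0 ∧ c 2 = 0
  · have hc0 : c 0 ≠ 0 := by
      fin_cases i
      · exact hi
      · exact absurd h12.1 hi
      · exact absurd h12.2 hi
    rw [h12.1, h12.2, zero_smul, zero_smul, add_zero, add_zero, smul_eq_zero] at hc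
    exact absurd (hc.resolve_left hc0) hv
  have hne : ((c 2 : ℂ) - c 1 * I) ≠ 0 := by
    intro h
    obtain ⟨h2, h1⟩ : c 2 = 0 ∧ c 1 = 0 := by simpa [Complex.ext_iff] using h
    exact h12 ⟨h1, h2⟩
  have key : ((c 2 : ℂ) - c 1 * I) • ofRealVec (imVec w) =
      -(c 0 : ℂ) • ofRealVec v - (c 1 : ℂ) • w := by
    funext k
    have hk := congrFun hc k
    apply Complex.ext <;> simp [ofRealVec, imVec, reVec] at hk ⊢; linarith
  rw [← N.smul_mem_iff hne, key]
  exact N.sub_mem (N.smul_mem _ hvN) (N.smul_mem _ hw)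


section SplitForm

variable {gR : (Fin 4 → ℝ) →ₗ[ℝ] (Fin 4 → ℝ) →ₗ[ℝ] ℝ} {b : Module.Basis (Fin 4) ℝ (Fin 4 → ℝ)}

lemma apply_eq_repr_of_etaS (hsig : ∀ i j, gR (b i) (b j) = etaS i j) (x y : Fin 4 → ℝ) :
    gR x y = b.repr x 0 * b.repr y 0 + b.repr x 1 * b.repr y 1
      - b.repr x 2 * b.repr y 2 - b.repr x 3 * b.repr y 3 := by
  conv_lhs => rw [← b.sum_repr x, ← b.sum_repr y]
  simp only [map_sum, map_smul, LinearMap.sum_apply, LinearMap.smul_apply, smul_eq_mul, hsig]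
  simp [Fin.sum_univ_four, etaS]
  ring

lemma symm_of_etaS (hsig : ∀ i j, gR (b i) (b j) = etaS i j) (x y : Fin 4 → ℝ) :
    gR x y = gR y x := by
  rw [apply_eq_repr_of_etaS hsig, apply_eq_repr_of_etaS hsig]
  ring

lemma finrank_le_two_of_semidefinite (hsig : ∀ i j, gR (b i) (b j) = etaS i j)
    (S : Submodule ℝ (Fin 4 → ℝ)) (hS : (∀ x ∈ S, 0 ≤ gR x x) ∨ ∀ x ∈ S, gR x x ≤ 0) :
    Module.finrank ℝ S ≤ 2 := by
  -- On a positive (negative) semidefinite subspace the two positive (negative) coordinates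
  -- already determine a vector.
  obtain ⟨i, j, hij⟩ : ∃ i j : Fin 4, ∀ x ∈ S, b.repr x i = 0 → b.repr x j = 0 → x = 0 := by
    have hzero : ∀ x, b.repr x 0 = 0 → b.repr x 1 = 0 → b.repr x 2 = 0 → b.repr x 3 = 0 →
        x = 0 := by
      intro x h0 h1 h2 h3
      rw [← b.repr.map_eq_zero_iff]
      ext k
      fin_cases k <;> assumption
    rcases hS with hS | hS
    · refine ⟨0, 1, fun x hx h0 h1 => ?_⟩
      have := hS x hx
      rw [apply_eq_repr_of_etaS hsig, h0, h1] at this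
      exact hzero x h0 h1 (by nlinarith) (by nlinarith)
    · refine ⟨2, 3, fun x hx h2 h3 => ?_⟩
      have := hS x hx
      rw [apply_eq_repr_of_etaS hsig, h2, h3] at this
      exact hzero x (by nlinarith) (by nlinarith) h2 h3
  let π : (Fin 4 → ℝ) →ₗ[ℝ] Fin 2 → ℝ := LinearMap.pi ![b.coord i, b.coord j]
  have hπ : Function.Injective (π.domRestrict S) := by
    rw [← LinearMap.ker_eq_bot, LinearMap.ker_eq_bot']
    rintro ⟨x, hx⟩ hπx
    have hi : b.repr x i = 0 := congrFun hπx 0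
    have hj : b.repr x j = 0 := congrFun hπx 1
    simpa using hij x hx hi hj
  simpa using LinearMap.finrank_le_finrank_of_injective hπ

lemma not_linearIndependent_of_null_orthogonal (hsig : ∀ i j, gR (b i) (b j) = etaS i j)
    {v x y : Fin 4 → ℝ} (hvv : gR v v = 0) (hvx : gR v x = 0) (hvy : gR v y = 0)
    (hxy : gR x y = 0) (hxx : gR x x = gR y y) : ¬ LinearIndependent ℝ ![v, x, y] := by
  intro hli
  set S := Submodule.span ℝ (Set.range ![v, x, y])
  have hS : ∀ z ∈ S, ∃ t : ℝ, 0 ≤ t ∧ gR z z = t * gR x x := by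
    intro z hz
    obtain ⟨c, rfl⟩ := (Submodule.mem_span_range_iff_exists_fun ℝ).mp hz
    refine ⟨c 1 ^ 2 + c 2 ^ 2, by positivity, ?_⟩
    simp only [Fin.sum_univ_three, Matrix.cons_val_zero, Matrix.cons_val_one,
      Matrix.cons_val_two, Matrix.head_cons, Matrix.tail_cons, map_add, map_smul,
      LinearMap.add_apply, LinearMap.smul_apply, smul_eq_mul, symm_of_etaS hsig _ v,
      symm_of_etaS hsig y x, hvv, hvx, hvy, hxy, ← hxx]
    ring
  have hsemidef : (∀ z ∈ S, 0 ≤ gR z z) ∨ ∀ z ∈ S, gR z z ≤ 0 := by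
    rcases le_total 0 (gR x x) with h | h
    · exact Or.inl fun z hz => by
        obtain ⟨t, ht, hz⟩ := hS z hz
        exact hz ▸ mul_nonneg ht h
    · exact Or.inr fun z hz => by
        obtain ⟨t, ht, hz⟩ := hS z hz
        exact hz ▸ mul_nonpos_of_nonneg_of_nonpos ht h
  have h3 : Module.finrank ℝ S = 3 := by simpa using finrank_span_eq_card hli
  have := finrank_le_two_of_semidefinite hsig S hsemidef
  omega

lemma conjMap_mem_of_ofRealVec_mem (hsig : ∀ i j, gR (b i) (b j) = etaS i j)
    {N : Submodule ℂ (Fin 4 → ℂ)} (hnull : ∀ x ∈ N, ∀ y ∈ N, gCext (fun v w => gR v w) x y = 0)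
    {v : Fin 4 → ℝ} (hv : v ≠ 0) (hvN : ofRealVec v ∈ N) {w : Fin 4 → ℂ} (hw : w ∈ N) :
    conjMap w ∈ N := by
  have hvv := (gCext_eq_zero_iff _ _ _).mp (hnull _ hvN _ hvN)
  have hvw := (gCext_eq_zero_iff _ _ _).mp (hnull _ hvN _ hw)
  have hww := (gCext_eq_zero_iff _ _ _).mp (hnull _ hw _ hw)
  simp only [reVec_ofRealVec, imVec_ofRealVec, map_zero, LinearMap.zero_apply, add_zero]
    at hvv hvw
  have hxy : gR (reVec w) (imVec w) = 0 := by
    linarith [hww.2, symm_of_etaS hsig (imVec w) (reVec w)]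
  have hdep := not_linearIndependent_of_null_orthogonal hsig hvv.1 hvw.1 hvw.2 hxy hww.1
  rw [conjMap_eq_sub]
  exact N.sub_mem hw (N.smul_mem _ (ofRealVec_imVec_mem hv hvN hw hdep))

end SplitForm

theorem split_totally_null_two_plane_has_real_index_zero_or_two_general
    (gR : (Fin 4 → ℝ) →ₗ[ℝ] (Fin 4 → ℝ) →ₗ[ℝ] ℝ)
    (b : Module.Basis (Fin 4) ℝ (Fin 4 → ℝ))
    (hsig : ∀ i j, gR (b i) (b j) = etaS i j)
    (N : Submodule ℂ (Fin 4 → ℂ))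
    (hdim : Module.finrank ℂ N = 2)
    (hnull : ∀ x ∈ N, ∀ y ∈ N, gCext (fun v w => gR v w) x y = 0) :
    Module.finrank ℂ ↥(N ⊓ Submodule.comap conjMap N) = 0 ∨
      Module.finrank ℂ ↥(N ⊓ Submodule.comap conjMap N) = 2 := by
  rcases eq_or_ne (N ⊓ Submodule.comap conjMap N) ⊥ with hbot | hne
  · left
    rw [hbot, finrank_bot]
  · right
    obtain ⟨x, ⟨hx, hcx⟩, hx0⟩ := Submodule.exists_mem_ne_zero_of_ne_bot hne
    obtain ⟨v, hv, hvN⟩ := exists_ofRealVec_mem hx hcx hx0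
    have hconj : N ≤ Submodule.comap conjMap N := fun w hw =>
      conjMap_mem_of_ofRealVec_mem hsig hnull hv hvN hw
    rw [inf_eq_left.mpr hconj, hdim]

theorem split_totally_null_two_plane_has_real_index_zero_or_two
    (gR : (Fin 4 → ℝ) →ₗ[ℝ] (Fin 4 → ℝ) →ₗ[ℝ] ℝ)
    (hsymm : ∀ v w, gR v w = gR w v)
    (b : Module.Basis (Fin 4) ℝ (Fin 4 → ℝ))
    (hsig : ∀ i j, gR (b i) (b j) = etaS i j)
    (N : Submodule ℂ (Fin 4 → ℂ))
    (hdim : Module.finrank ℂ N = 2)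
    (hnull : ∀ x ∈ N, ∀ y ∈ N, gCext (fun v w => gR v w) x y = 0) :
    Module.finrank ℂ ↥(N ⊓ Submodule.comap conjMap N) = 0 ∨
      Module.finrank ℂ ↥(N ⊓ Submodule.comap conjMap N) = 2 :=
  split_totally_null_two_plane_has_real_index_zero_or_two_general gR b hsig N hdim hnull
end

section
/- Let Ψ₀,Ψ₁,Ψ₂,Ψ₃,Ψ₄ ∈ ℂ satisfy the Euclidean-signature reality conditions Ψ₄ = conj(Ψ₀), Ψ₃ = conj(Ψ₁), Ψ₂ = conj(Ψ₂) (i.e. Ψ₂ is real). If z₁ ∈ ℂ, z₁ ≠ 0, is a root of the quartic Ψ₄z⁴ − 4Ψ₃z³ + 6Ψ₂z² + 4Ψ₁z + Ψ₀ = 0, then z₂ = −1/conj(z₁) is also a root. -/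
open scoped ComplexConjugate

section StarField

variable {K : Type*} [Field K] [StarRing K]

/-- The quartic in the Weyl spinor components `Ψᵢ` whose roots are the principal selfdual totally
null 2-planes. -/
def spinorQuartic (Ψ₀ Ψ₁ Ψ₂ Ψ₃ Ψ₄ z : K) : K :=
  Ψ₄ * z ^ 4 - 4 * Ψ₃ * z ^ 3 + 6 * Ψ₂ * z ^ 2 + 4 * Ψ₁ * z + Ψ₀

theorem spinorQuartic_neg_inv_conj_mul_pow_four (Ψ₀ Ψ₁ : K) {Ψ₂ : K} (h₂ : conj Ψ₂ = Ψ₂)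
    {z : K} (hz : z ≠ 0) :
    spinorQuartic Ψ₀ Ψ₁ Ψ₂ (conj Ψ₁) (conj Ψ₀) (-1 / conj z) * conj z ^ 4 =
      conj (spinorQuartic Ψ₀ Ψ₁ Ψ₂ (conj Ψ₁) (conj Ψ₀) z) := by
  have hz' : conj z ≠ 0 := (map_ne_zero _).mpr hz
  simp only [spinorQuartic, map_add, map_sub, map_mul, map_pow, map_ofNat, starRingEnd_self_apply,
    h₂]
  field_simp
  ring

end StarField

theorem euclidean_roots_pair_up
    (Ψ₀ Ψ₁ Ψ₂ Ψ₃ Ψ₄ : ℂ)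
    (h4 : Ψ₄ = conj Ψ₀) (h3 : Ψ₃ = conj Ψ₁) (h2 : Ψ₂ = conj Ψ₂)
    (z₁ : ℂ) (hz : z₁ ≠ 0)
    (hroot : Ψ₄ * z₁ ^ 4 - 4 * Ψ₃ * z₁ ^ 3 + 6 * Ψ₂ * z₁ ^ 2 + 4 * Ψ₁ * z₁ + Ψ₀ = 0) :
    Ψ₄ * (-1 / conj z₁) ^ 4 - 4 * Ψ₃ * (-1 / conj z₁) ^ 3 +
      6 * Ψ₂ * (-1 / conj z₁) ^ 2 + 4 * Ψ₁ * (-1 / conj z₁) + Ψ₀ = 0 := by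
  subst h4 h3
  have key := spinorQuartic_neg_inv_conj_mul_pow_four Ψ₀ Ψ₁ h2.symm hz
  rw [show spinorQuartic _ _ _ _ _ z₁ = 0 from hroot, map_zero, mul_eq_zero] at key
  exact key.resolve_right (pow_ne_zero 4 ((map_ne_zero _).mpr hz))
end

section
/- In the Euclidean signature case, the quartic Ψ₄z⁴ − 4Ψ₃z³ + 6Ψ₂z² + 4Ψ₁z + Ψ₀ with reality conditions Ψ₄ = conj(Ψ₀), Ψ₃ = conj(Ψ₁), Ψ₂ ∈ ℝ, and (Ψ₀,Ψ₁,Ψ₂) ≠ (0,0,0), never has a root of multiplicity three or four. (Hence only Petrov types G, D and 0 occur in Riemannian signature.) -/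
open Polynomial
open scoped ComplexConjugate

/-
Under the reality conditions the quartic satisfies `p z = z ^ 4 * conj (p (-1 / conj z))`, so its
roots on the Riemann sphere come in antipodal pairs `z`, `-1 / conj z` of equal multiplicity, and
the two points differ because `|z| ^ 2 ≠ -1`. A root of multiplicity at least three would thus give
a nonzero quartic six roots. Concretely, multiplicity at least three at `z` means that the second
partial derivatives of the homogeneous quartic vanish at `(z : 1)`, and complex conjugation turns
these three equations at `z` into the ones at `-1 / conj z`. At `z = 0` and at `∞` they say
directly that `Ψ₀ = Ψ₁ = Ψ₂ = 0`.
-/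

theorem Polynomial.rootMultiplicity_add_rootMultiplicity_le_natDegree {R : Type*} [CommRing R]
    [IsDomain R] (p : R[X]) {z w : R} (hzw : z ≠ w) :
    p.rootMultiplicity z + p.rootMultiplicity w ≤ p.natDegree := by
  classical
  calc p.rootMultiplicity z + p.rootMultiplicity w
      = Multiset.card (Multiset.replicate (p.rootMultiplicity z) z +
          Multiset.replicate (p.rootMultiplicity w) w) := by simp
    _ ≤ Multiset.card p.roots := Multiset.card_le_card <| Multiset.le_iff_count.2 fun x => by
        rw [count_roots, Multiset.count_add, Multiset.count_replicate, Multiset.count_replicate]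
        split_ifs <;> subst_vars <;> simp_all
    _ ≤ p.natDegree := card_roots' p

theorem Complex.neg_inv_conj_ne_self {z : ℂ} (hz : z ≠ 0) : -(conj z)⁻¹ ≠ z := by
  intro h
  have hz' : conj z ≠ 0 := (_root_.map_ne_zero _).2 hz
  have hnorm : ((Complex.normSq z : ℝ) : ℂ) = -1 := by
    rw [← Complex.mul_conj]
    nth_rewrite 1 [← h]
    rw [neg_mul, inv_mul_cancel₀ hz']
  have := congrArg Complex.re hnorm
  simp only [Complex.ofReal_re, Complex.neg_re, Complex.one_re] at this
  linarith [Complex.normSq_nonneg z]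

noncomputable def euclideanQuartic (a b c : ℂ) : ℂ[X] :=
  C (conj a) * X ^ 4 - C (4 * conj b) * X ^ 3 + C (6 * c) * X ^ 2 + C (4 * b) * X + C a

/-- `F_xx / 12`, `F_xy / 12` and `F_yy / 12` vanish at `(z, 1)`, where
`F x y = y ^ 4 * (euclideanQuartic a b c).eval (x / y)` is the homogenized quartic. -/
def SecondPolarVanishes (a b c z : ℂ) : Prop :=
  conj a * z ^ 2 - 2 * conj b * z + c = 0 ∧ -conj b * z ^ 2 + 2 * c * z + b = 0 ∧
    c * z ^ 2 + 2 * b * z + a = 0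

section

variable {a b c : ℂ}

theorem natDegree_euclideanQuartic_le : (euclideanQuartic a b c).natDegree ≤ 4 := by
  unfold euclideanQuartic; compute_degree

theorem two_le_natDegree_euclideanQuartic (h : ¬(a = 0 ∧ b = 0 ∧ c = 0)) :
    2 ≤ (euclideanQuartic a b c).natDegree := by
  by_contra! hlt
  have hcoeff (n : ℕ) (hn : 2 ≤ n) : (euclideanQuartic a b c).coeff n = 0 :=
    coeff_eq_zero_of_natDegree_lt (by omega)
  have h2 := hcoeff 2 le_rfl
  have h3 := hcoeff 3 (by norm_num)
  have h4 := hcoeff 4 (by norm_num)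
  simp only [euclideanQuartic, coeff_add, coeff_sub, coeff_C_mul, coeff_X_pow, coeff_C,
    coeff_X] at h2 h3 h4
  norm_num at h2 h3 h4
  exact h ⟨h4, h3, h2⟩

theorem three_le_rootMultiplicity_euclideanQuartic_iff (hp : euclideanQuartic a b c ≠ 0)
    (z : ℂ) : 3 ≤ (euclideanQuartic a b c).rootMultiplicity z ↔ SecondPolarVanishes a b c z := by
  rw [Nat.succ_le_iff, lt_rootMultiplicity_iff_isRoot_iterate_derivative hp]
  have hroots : (∀ m ≤ 2, (derivative^[m] (euclideanQuartic a b c)).IsRoot z) ↔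
      (euclideanQuartic a b c).eval z = 0 ∧ (derivative (euclideanQuartic a b c)).eval z = 0 ∧
        (derivative (derivative (euclideanQuartic a b c))).eval z = 0 :=
    ⟨fun h => ⟨h 0 (by norm_num), h 1 (by norm_num), h 2 le_rfl⟩,
      fun h m hm => by interval_cases m <;> simp [h]⟩
  rw [hroots]
  simp only [euclideanQuartic, SecondPolarVanishes, map_mul, eval_add, eval_sub, eval_mul, eval_C,
    eval_pow, eval_X, derivative_sub, derivative_mul, derivative_C, zero_mul,
    derivative_X_pow_succ, Nat.cast_ofNat, map_add, map_one, zero_add, mul_zero, add_zero,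
    Nat.cast_one, pow_one, derivative_X, mul_one, eval_one, derivative_one, neg_mul]
  constructor
  · rintro ⟨h0, h1, h2⟩
    exact ⟨by linear_combination h2 / 12, by linear_combination h1 / 4 - z * h2 / 12,
      by linear_combination h0 - z * h1 / 2 + z ^ 2 * h2 / 12⟩
  · rintro ⟨h1, h2, h3⟩
    exact ⟨by linear_combination h3 + 2 * z * h2 + z ^ 2 * h1,
      by linear_combination 4 * h2 + 4 * z * h1, by linear_combination 12 * h1⟩

theorem SecondPolarVanishes.neg_inv_conj (hc : conj c = c) {z : ℂ}
    (h : SecondPolarVanishes a b c z) : SecondPolarVanishes a b c (-(conj z)⁻¹) := by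
  rcases eq_or_ne z 0 with rfl | hz
  · simpa using h
  obtain ⟨h1, h2, h3⟩ := h
  have hz' : conj z ≠ 0 := by simpa using hz
  have c1 := congrArg conj h1
  have c2 := congrArg conj h2
  have c3 := congrArg conj h3
  simp only [map_add, map_sub, map_mul, map_neg, map_pow, map_ofNat, map_zero, Complex.conj_conj,
    hc] at c1 c2 c3
  refine ⟨?_, ?_, ?_⟩ <;> field_simp
  · linear_combination c3
  · linear_combination -c2
  · linear_combination c1

end

theorem euclidean_no_triple_or_quadruple_roots
    (Ψ₀ Ψ₁ Ψ₂ Ψ₃ Ψ₄ : ℂ)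
    (h4 : Ψ₄ = conj Ψ₀) (h3 : Ψ₃ = conj Ψ₁) (h2 : Ψ₂ = conj Ψ₂)
    (hne : ¬(Ψ₀ = 0 ∧ Ψ₁ = 0 ∧ Ψ₂ = 0)) :
    (∀ z : ℂ,
      (C Ψ₄ * X ^ 4 - C (4 * Ψ₃) * X ^ 3 + C (6 * Ψ₂) * X ^ 2 + C (4 * Ψ₁) * X
          + C Ψ₀).rootMultiplicity z < 3) ∧
    4 - (C Ψ₄ * X ^ 4 - C (4 * Ψ₃) * X ^ 3 + C (6 * Ψ₂) * X ^ 2 + C (4 * Ψ₁) * X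
          + C Ψ₀).natDegree < 3 := by
  subst h4 h3
  change (∀ z, (euclideanQuartic Ψ₀ Ψ₁ Ψ₂).rootMultiplicity z < 3) ∧
    4 - (euclideanQuartic Ψ₀ Ψ₁ Ψ₂).natDegree < 3
  have hdeg := two_le_natDegree_euclideanQuartic hne
  have hp : euclideanQuartic Ψ₀ Ψ₁ Ψ₂ ≠ 0 := ne_zero_of_natDegree_gt hdeg
  refine ⟨fun z => ?_, by omega⟩
  by_contra! hz3
  have hpolar := (three_le_rootMultiplicity_euclideanQuartic_iff hp z).1 hz3
  rcases eq_or_ne z 0 with rfl | hz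
  · obtain ⟨hc, hb, ha⟩ := hpolar
    exact hne ⟨by simpa using ha, by simpa using hb, by simpa using hc⟩
  have hw3 := (three_le_rootMultiplicity_euclideanQuartic_iff hp _).2 (hpolar.neg_inv_conj h2.symm)
  have hsum := (euclideanQuartic Ψ₀ Ψ₁ Ψ₂).rootMultiplicity_add_rootMultiplicity_le_natDegree
    (Complex.neg_inv_conj_ne_self hz).symm
  have hle : (euclideanQuartic Ψ₀ Ψ₁ Ψ₂).natDegree ≤ 4 := natDegree_euclideanQuartic_le
  omega
end

section
/- Suppose smooth complex-valued functions Ψ₁, and connection coefficients α',β,ε,ε',ρ,ρ',τ,π',μ,μ',λ',σ',κ',γ,γ',ν,ν' on a 4-manifold satisfy: the commutator relation [δ,D] = (ρ'+ε'−ε)δ + σ∂ + κΔ + (α'+β+π')D with κ = σ = 0, the Newman-Penrose equations Dβ = δε − α'ε − βε' − γκ − κμ − επ' − βρ' − ασ + πσ − Ψ₁, δρ = ∂σ + κμ' − κμ + α'ρ + βρ − 3ασ + β'σ − ρ'τ + ρτ − Ψ₁ − P₁₄, Dτ = Δκ − γ'κ − 3γκ + π'ρ + πσ − στ' − ε'τ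 + ετ − ρτ − Ψ₁ + P₁₄ (with κ = σ = 0), together with δΨ₁ = 2(β + 2τ)Ψ₁ and DΨ₁ = 2(ε − 2ρ)Ψ₁. Then Ψ₁ ≡ 0. -/
/-!
Substituting `δΨ₁ = aΨ₁` and `DΨ₁ = bΨ₁` into the commutator `[δ, D]Ψ₁` gives
`(δb - Da)Ψ₁ = ((ρ' + ε' - ε)a + (α' + β + π')b)Ψ₁`. The Newman-Penrose equations express
`δb - Da` through the spin coefficients and `Ψ₁`; everything cancels except `10Ψ₁²`, so `Ψ₁`
vanishes pointwise.
-/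

theorem Derivation.map_ofNat {R A M : Type*} [CommSemiring R] [CommSemiring A] [Algebra R A]
    [AddCommMonoid M] [Module A M] [Module R M] (D : Derivation R A M) (n : ℕ) [n.AtLeastTwo] :
    D (ofNat(n) : A) = 0 := by
  rw [← Nat.cast_ofNat]
  exact D.map_natCast n

theorem Derivation.commutator_apply_of_eq_mul {R A : Type*} [CommRing R] [CommRing A]
    [Algebra R A] (δ D : Derivation R A A) {x a b : A} (ha : δ x = a * x) (hb : D x = b * x) :
    ⁅δ, D⁆ x = (δ b - D a) * x := by
  rw [Derivation.commutator_apply, hb, ha, Derivation.leibniz, Derivation.leibniz, ha, hb,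
    smul_eq_mul, smul_eq_mul, smul_eq_mul, smul_eq_mul]
  ring

theorem goldberg_sachs_key_lemma
    (M : Type*)
    (δ Dp Dn D : Derivation ℂ (M → ℂ) (M → ℂ))
    (α α' β β' γ γ' ε ε' κ μ π π' ρ ρ' σ τ τ' Ψ₁ P₁₄ : M → ℂ)
    (hκ : κ = 0) (hσ : σ = 0)
    -- commutator relation [δ,D] = (ρ'+ε'−ε)δ + σ∂ + κΔ + (α'+β+π')D
    (hcomm : ∀ f : M → ℂ,
      δ (D f) - D (δ f) =
        (ρ' + ε' - ε) * δ f + σ * Dp f + κ * Dn f + (α' + β + π') * D f)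
    -- (np2): Dβ = δε − α'ε − βε' − γκ − κμ − επ' − βρ' − ασ + πσ − Ψ₁
    (hnp2 : D β = δ ε - α' * ε - β * ε' - γ * κ - κ * μ - ε * π' - β * ρ'
        - α * σ + π * σ - Ψ₁)
    -- (np3): δρ = ∂σ + κμ' − κμ + α'ρ + βρ − 3ασ + β'σ − ρ'τ + ρτ − Ψ₁ − P₁₄
    (μ' : M → ℂ)
    (hnp3 : δ ρ = Dp σ + κ * μ' - κ * μ + α' * ρ + β * ρ - 3 * α * σ + β' * σ
        - ρ' * τ + ρ * τ - Ψ₁ - P₁₄)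
    -- (np4): Dτ = Δκ − γ'κ − 3γκ + π'ρ + πσ − στ' − ε'τ + ετ − ρτ − Ψ₁ + P₁₄
    (hnp4 : D τ = Dn κ - γ' * κ - 3 * γ * κ + π' * ρ + π * σ - σ * τ'
        - ε' * τ + ε * τ - ρ * τ - Ψ₁ + P₁₄)
    (hδΨ : δ Ψ₁ = 2 * (β + 2 * τ) * Ψ₁)
    (hDΨ : D Ψ₁ = 2 * (ε - 2 * ρ) * Ψ₁) :
    Ψ₁ = 0 := by
  subst hκ hσ
  have hΨ := hcomm Ψ₁
  rw [← Derivation.commutator_apply, δ.commutator_apply_of_eq_mul D hδΨ hDΨ, hδΨ, hDΨ] at hΨ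
  simp only [Derivation.leibniz, map_add, map_sub, smul_eq_mul, Derivation.map_ofNat,
    hnp2, hnp3, hnp4, map_zero] at hΨ
  have h10 : 10 • Ψ₁ ^ 2 = 0 := by linear_combination hΨ
  exact IsReduced.eq_zero Ψ₁ ⟨2, (nsmul_eq_zero_iff.mp h10).resolve_right (by norm_num)⟩
end
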